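/- Let L(t) = Σ_{p≥0} t^p/(p+1) for t in the open unit disc 𝔻 (so L(t) = −log(1−t)/t for t ≠ 0 and L(0) = 1, the Dirichlet kernel function). Then there exists a sequence (a_p)_{p≥1} of strictly positive real numbers such that the power series Σ_{p≥1} a_p t^p converges for every t ∈ 𝔻 and L(t)·(1 − Σ_{p≥1} a_p t^p) = 1 for all t ∈ 𝔻. Equivalently, the reciprocal 1/L is holomorphic on 𝔻 and its Taylor coefficients at 0 satisfy: the constant term is 1 and the coefficient of t^p is strictly negative for every p ≥ 1. -/

import Mathlib

/-!
Kaluza's lemma: if `c 0 = 1`, `c > 0` and the ratios `c (n + 1) / c n` increase strictly, then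
every coefficient `b (n + 1)` of the reciprocal `b = 1 / Σ c n X^n` is negative. Inductively,
subtracting `c (n + 2) / c (n + 1)` times the vanishing `(n + 1)`-st coefficient of `b * c` from the
`(n + 2)`-nd one writes `b (n + 2)` as a combination of `b 1, …, b (n + 1)` with positive weights.
If moreover `c` is antitone, the identity `Σ_{k ≤ m} -b (k + 1) c (m - k) = c (m + 1)` bounds the
partial sums of `-b (k + 1)` by `1`, so `Σ b n t^n` converges absolutely on the closed unit disc and
the Cauchy product with `Σ c n t^n` is `1` on the open one. The coefficients `1 / (n + 1)` of `L`
satisfy all these hypotheses.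
-/

open Complex Metric

open PowerSeries Finset

theorem PowerSeries.tsum_coeff_mul_pow_mul_tsum {R : Type*} [NormedCommRing R] [CompleteSpace R]
    {f g : R⟦X⟧} {t : R} (hf : Summable fun n => ‖coeff n f * t ^ n‖)
    (hg : Summable fun n => ‖coeff n g * t ^ n‖) :
    (∑' n, coeff n f * t ^ n) * (∑' n, coeff n g * t ^ n) = ∑' n, coeff n (f * g) * t ^ n := by
  rw [tsum_mul_tsum_eq_tsum_sum_antidiagonal_of_summable_norm hf hg]
  refine tsum_congr fun n => ?_
  rw [coeff_mul, sum_mul]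
  refine sum_congr rfl fun p hp => ?_
  rw [← mem_antidiagonal.1 hp, pow_add]
  ring

theorem summable_norm_ofReal_mul_pow {a : ℕ → ℝ} (ha : Summable fun n => |a n|) {t : ℂ}
    (ht : ‖t‖ ≤ 1) : Summable fun n => ‖(a n : ℂ) * t ^ n‖ := by
  refine ha.of_nonneg_of_le (fun n => norm_nonneg _) fun n => ?_
  rw [norm_mul, norm_pow, norm_real, Real.norm_eq_abs]
  exact mul_le_of_le_one_right (abs_nonneg _) (pow_le_one₀ (norm_nonneg t) ht)

section Kaluza

variable {c : ℕ → ℝ}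

theorem coeff_zero_inv_mk (hc0 : c 0 = 1) : coeff 0 (mk c)⁻¹ = 1 := by
  simp [constantCoeff_inv, hc0]

theorem sum_antidiagonal_coeff_inv_mk_mul (hc0 : c 0 = 1) (n : ℕ) :
    ∑ p ∈ antidiagonal n, coeff p.1 (mk c)⁻¹ * c p.2 = if n = 0 then 1 else 0 := by
  have h : (mk c)⁻¹ * mk c = 1 := PowerSeries.inv_mul_cancel _ (by simp [hc0])
  simpa [coeff_mul, coeff_one] using congrArg (coeff n) h

theorem coeff_succ_inv_mk (hc0 : c 0 = 1) (n : ℕ) :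
    coeff (n + 1) (mk c)⁻¹ = -∑ p ∈ antidiagonal n, coeff p.1 (mk c)⁻¹ * c (p.2 + 1) := by
  have h := sum_antidiagonal_coeff_inv_mk_mul hc0 (n + 1)
  rw [Nat.sum_antidiagonal_succ', hc0] at h
  simp only [mul_one, Nat.add_one_ne_zero, if_false] at h
  linarith

theorem coeff_succ_inv_mk_neg (hc0 : c 0 = 1) (hpos : ∀ n, 0 < c n)
    (hratio : StrictMono fun n => c (n + 1) / c n) (n : ℕ) :
    coeff (n + 1) (mk c)⁻¹ < 0 := by
  induction n using Nat.strong_induction_on with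
  | _ n ih =>
  cases n with
  | zero => simpa [coeff_succ_inv_mk hc0, coeff_zero_inv_mk hc0] using hpos 1
  | succ n =>
    set r := c (n + 2) / c (n + 1)
    have hrec : coeff (n + 2) (mk c)⁻¹
        = ∑ p ∈ antidiagonal (n + 1), coeff p.1 (mk c)⁻¹ * (r * c p.2 - c (p.2 + 1)) := by
      have h := sum_antidiagonal_coeff_inv_mk_mul hc0 (n + 1)
      simp only [Nat.add_one_ne_zero, if_false] at h
      simp only [mul_sub, sum_sub_distrib, mul_left_comm _ r, ← mul_sum, h, mul_zero, zero_sub]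
      exact coeff_succ_inv_mk hc0 (n + 1)
    have hweight_zero : r * c (n + 1) - c (n + 2) = 0 := by
      rw [div_mul_cancel₀ _ (hpos (n + 1)).ne', sub_self]
    rw [hrec, Nat.sum_antidiagonal_succ, hweight_zero, mul_zero, zero_add]
    refine sum_neg (fun p hp => mul_neg_of_neg_of_pos (ih p.1 ?_) ?_) ⟨(n, 0), by simp⟩
    · have := mem_antidiagonal.1 hp; omega
    · have hlt : c (p.2 + 1) / c p.2 < r := hratio (by have := mem_antidiagonal.1 hp; omega)
      rw [div_lt_iff₀ (hpos p.2)] at hlt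
      linarith

theorem sum_range_neg_coeff_succ_inv_mk_le (hc0 : c 0 = 1) (hpos : ∀ n, 0 < c n)
    (hratio : StrictMono fun n => c (n + 1) / c n) (hanti : Antitone c) (n : ℕ) :
    ∑ k ∈ range n, -coeff (k + 1) (mk c)⁻¹ ≤ 1 := by
  cases n with
  | zero => simp
  | succ m =>
    have hconv : ∑ p ∈ antidiagonal m, -coeff (p.1 + 1) (mk c)⁻¹ * c p.2 = c (m + 1) := by
      have h := sum_antidiagonal_coeff_inv_mk_mul hc0 (m + 1)
      rw [Nat.sum_antidiagonal_succ, coeff_zero_inv_mk hc0] at h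
      simp only [one_mul, Nat.add_one_ne_zero, if_false] at h
      simp only [neg_mul, sum_neg_distrib]
      linarith
    have hle : c (m + 1) * ∑ k ∈ range (m + 1), -coeff (k + 1) (mk c)⁻¹ ≤ c (m + 1) := by
      rw [← Nat.sum_antidiagonal_eq_sum_range_succ_mk (fun p => -coeff (p.1 + 1) (mk c)⁻¹),
        mul_sum]
      conv_rhs => rw [← hconv]
      refine sum_le_sum fun p hp => ?_
      rw [mul_comm]
      refine mul_le_mul_of_nonneg_left (hanti ?_) (neg_nonneg.2 ?_)
      · have := mem_antidiagonal.1 hp; omega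
      · exact (coeff_succ_inv_mk_neg hc0 hpos hratio p.1).le
    exact (mul_le_iff_le_one_right (hpos (m + 1))).1 hle

theorem summable_abs_coeff_inv_mk (hc0 : c 0 = 1) (hpos : ∀ n, 0 < c n)
    (hratio : StrictMono fun n => c (n + 1) / c n) (hanti : Antitone c) :
    Summable fun n => |coeff n (mk c)⁻¹| := by
  refine (summable_nat_add_iff 1).1 ?_
  simp only [fun n => abs_of_neg (coeff_succ_inv_mk_neg hc0 hpos hratio n)]
  exact summable_of_sum_range_le (fun n => (neg_pos.2 (coeff_succ_inv_mk_neg hc0 hpos hratio n)).le)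
    (sum_range_neg_coeff_succ_inv_mk_le hc0 hpos hratio hanti)

theorem hasSum_neg_coeff_succ_inv_mk_mul_pow (hc0 : c 0 = 1) (hpos : ∀ n, 0 < c n)
    (hratio : StrictMono fun n => c (n + 1) / c n) (hanti : Antitone c) {t : ℂ} (ht : ‖t‖ ≤ 1) :
    HasSum (fun p => ((-coeff (p + 1) (mk c)⁻¹ : ℝ) : ℂ) * t ^ (p + 1))
      (1 - ∑' n, ((coeff n (mk c)⁻¹ : ℝ) : ℂ) * t ^ n) := by
  have hg := summable_norm_ofReal_mul_pow (summable_abs_coeff_inv_mk hc0 hpos hratio hanti) ht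
  have h := (hasSum_nat_add_iff' 1).2 hg.of_norm.hasSum
  simpa [coeff_zero_inv_mk hc0, neg_sub] using h.neg

theorem tsum_mul_tsum_coeff_inv_mk (hc0 : c 0 = 1) (hpos : ∀ n, 0 < c n)
    (hratio : StrictMono fun n => c (n + 1) / c n) (hanti : Antitone c) {t : ℂ} (ht : ‖t‖ < 1) :
    (∑' n, (c n : ℂ) * t ^ n) * ∑' n, ((coeff n (mk c)⁻¹ : ℝ) : ℂ) * t ^ n = 1 := by
  have hf : Summable fun n => ‖(c n : ℂ) * t ^ n‖ := by
    refine (summable_geometric_of_lt_one (norm_nonneg t) ht).of_nonneg_of_le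
      (fun n => norm_nonneg _) fun n => ?_
    rw [norm_mul, norm_pow, norm_real, Real.norm_of_nonneg (hpos n).le]
    exact mul_le_of_le_one_left (by positivity) (hc0 ▸ hanti (Nat.zero_le n))
  have hg := summable_norm_ofReal_mul_pow (summable_abs_coeff_inv_mk hc0 hpos hratio hanti) ht.le
  have h := PowerSeries.tsum_coeff_mul_pow_mul_tsum (f := PowerSeries.map (algebraMap ℝ ℂ) (mk c))
    (g := PowerSeries.map (algebraMap ℝ ℂ) (mk c)⁻¹) (t := t) (by simpa using hf)
    (by simpa using hg)
  rw [← map_mul, PowerSeries.mul_inv_cancel _ (by simp [hc0]), map_one] at h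
  simpa [coeff_one, tsum_ite_eq] using h

end Kaluza

noncomputable def dirichletKernelCoeff (n : ℕ) : ℝ := ((n : ℝ) + 1)⁻¹

theorem dirichletKernelCoeff_zero : dirichletKernelCoeff 0 = 1 := by
  simp [dirichletKernelCoeff]

theorem dirichletKernelCoeff_pos (n : ℕ) : 0 < dirichletKernelCoeff n := by
  unfold dirichletKernelCoeff
  positivity

theorem antitone_dirichletKernelCoeff : Antitone dirichletKernelCoeff :=
  fun _ _ h => inv_anti₀ (by positivity) (by simpa using h)

theorem strictMono_dirichletKernelCoeff_succ_div :
    StrictMono fun n => dirichletKernelCoeff (n + 1) / dirichletKernelCoeff n := by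
  refine strictMono_nat_of_lt_succ fun n => ?_
  simp only [dirichletKernelCoeff]
  push_cast
  rw [div_lt_div_iff₀ (by positivity) (by positivity)]
  field_simp
  nlinarith

theorem stmt4 :
    ∃ a : ℕ → ℝ, (∀ p, 0 < a p) ∧
      ∀ t ∈ ball (0 : ℂ) 1, ∃ s : ℂ,
        HasSum (fun p : ℕ => (a p : ℂ) * t ^ (p + 1)) s ∧
        (∑' p : ℕ, t ^ p / ((p : ℂ) + 1)) * (1 - s) = 1 := by
  have hc0 := dirichletKernelCoeff_zero
  have hpos := dirichletKernelCoeff_pos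
  have hratio := strictMono_dirichletKernelCoeff_succ_div
  have hanti := antitone_dirichletKernelCoeff
  refine ⟨fun p => -coeff (p + 1) (mk dirichletKernelCoeff)⁻¹,
    fun p => neg_pos.2 (coeff_succ_inv_mk_neg hc0 hpos hratio p), fun t ht => ?_⟩
  have ht : ‖t‖ < 1 := mem_ball_zero_iff.1 ht
  refine ⟨_, hasSum_neg_coeff_succ_inv_mk_mul_pow hc0 hpos hratio hanti ht.le, ?_⟩
  rw [sub_sub_cancel]
  convert tsum_mul_tsum_coeff_inv_mk hc0 hpos hratio hanti ht using 3 with n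
  simp [dirichletKernelCoeff, div_eq_mul_inv, mul_comm]
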